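/- Let A₃ be the 2-dimensional complex pre-Lie algebra with the single nonzero product e₁·e₁ = e₂. For all r₂₁, r₂₂ ∈ ℂ, the linear map P with P(e₁) = r₂₁e₂, P(e₂) = r₂₂e₂ is a Reynolds operator on A₃. -/
import Mathlib

noncomputable section

abbrev V : Type := ℂ × ℂ

def mul : V → V → V := fun x y => ((0:ℂ), x.1*y.1)

def e1 : V := (1, 0)
def e2 : V := (0, 1)

theorem stmt9 (r21 r22 : ℂ) (P : V →ₗ[ℂ] V)
    (h1 : P e1 = r21 • e2) (h2 : P e2 = r22 • e2) :
    ∀ x y : V, mul (P x) (P y) = P (mul x (P y) + mul (P x) y - mul (P x) (P y)) := by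
  have key : ∀ x : V, (P x).1 = 0 := by
    intro x
    have hx : x = x.1 • e1 + x.2 • e2 := by
      simp [e1, e2, Prod.ext_iff]
    rw [hx, map_add, map_smul, map_smul, h1, h2]
    simp [e2]
  intro x y
  have hPx := key x
  have hPy := key y
  have : mul x (P y) + mul (P x) y - mul (P x) (P y) = (0 : V) := by
    simp [mul, hPx, hPy, Prod.ext_iff]
  rw [this, map_zero]
  simp [mul, hPx, hPy, Prod.ext_iff]
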